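/- arXiv:2206.13678 — 2 statements merged into one kernel-verified Lean document; each statement's English description precedes it below -/
import Mathlib

section
/- Suppose G contains a triangle q, v_1, v_2 through the chosen vertex q (i.e., edges qv_1, qv_2, v_1v_2 ∈ E). Then every feasible solution of the LP relaxation of the POP1 model satisfies 1 + ∑_{i=1}^H g_{i,q} ≥ 7/3. -/
open Finset

private lemma pop1_tele (f : ℕ → ℝ) :
    ∀ H : ℕ, 2 ≤ H → ∑ i ∈ Icc 2 H, (f (i - 1) - f i) = f 1 - f H := by
  intro H
  induction H with
  | zero => omega
  | succ n ih =>
    intro h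
    rcases Nat.lt_or_ge n 2 with hn | hn
    · interval_cases n
      · omega
      · simp
    · rw [Finset.sum_Icc_succ_top (by omega), ih hn]
      simp

private lemma pop1_shift (f : ℕ → ℝ) (H : ℕ) :
    ∑ i ∈ Icc 2 H, f (i - 1) = ∑ i ∈ Icc 1 (H - 1), f i := by
  apply Finset.sum_nbij' (i := fun i => i - 1) (j := fun j => j + 1)
  · intro a ha; simp only [mem_Icc] at *; omega
  · intro a ha; simp only [mem_Icc] at *; omega
  · intro a ha; simp only [mem_Icc] at ha; omega
  · intro a ha; simp only [mem_Icc] at ha; omega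
  · intro a _; rfl

/-- If `G` contains a triangle `q, v₁, v₂` through the chosen vertex `q`, then
every feasible solution of the LP relaxation of POP1 satisfies `1 + ∑_{i=1}^H g i q ≥ 7/3`. -/
theorem pop1_triangle_bound {V : Type*} [Fintype V] (G : SimpleGraph V)
    (H : ℕ) (hH : 2 ≤ H) (q v₁ v₂ : V)
    (hqv₁ : G.Adj q v₁) (hqv₂ : G.Adj q v₂) (hv₁v₂ : G.Adj v₁ v₂)
    (g : ℕ → V → ℝ)
    (hbound : ∀ i v, 0 ≤ g i v ∧ g i v ≤ 1)
    (hgH : ∀ v : V, g H v = 0)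
    (hmono : ∀ v : V, ∀ i ∈ Icc 2 H, g (i - 1) v - g i v ≥ 0)
    (hedge1 : ∀ u v : V, G.Adj u v → g 1 u + g 1 v ≥ 2 - g 1 q)
    (hedge2 : ∀ u v : V, G.Adj u v → ∀ i ∈ Icc 2 H,
      (g (i - 1) u - g i u) + (g (i - 1) v - g i v) ≤ g (i - 1) q)
    (hqmax : ∀ v : V, ∀ i ∈ Icc 1 H, g i q - g i v ≥ 0) :
    1 + ∑ i ∈ Icc 1 H, g i q ≥ 7 / 3 := by
  set S := ∑ i ∈ Icc 1 H, g i q with hS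
  -- For every edge uv, S ≥ g 1 u + g 1 v
  have key : ∀ u v : V, G.Adj u v → g 1 u + g 1 v ≤ S := by
    intro u v huv
    have h1 : ∑ i ∈ Icc 2 H, ((g (i - 1) u - g i u) + (g (i - 1) v - g i v))
        ≤ ∑ i ∈ Icc 2 H, g (i - 1) q :=
      Finset.sum_le_sum (fun i hi => hedge2 u v huv i hi)
    have h2 : ∑ i ∈ Icc 2 H, ((g (i - 1) u - g i u) + (g (i - 1) v - g i v))
        = g 1 u + g 1 v := by
      rw [Finset.sum_add_distrib, pop1_tele (fun i => g i u) H hH,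
        pop1_tele (fun i => g i v) H hH, hgH u, hgH v]
      ring
    have h3 : ∑ i ∈ Icc 2 H, g (i - 1) q ≤ S := by
      rw [pop1_shift (fun i => g i q) H]
      apply Finset.sum_le_sum_of_subset_of_nonneg
      · apply Finset.Icc_subset_Icc_right; omega
      · intro i _ _; exact (hbound i q).1
    linarith
  have k1 := key q v₁ hqv₁
  have k2 := key q v₂ hqv₂
  have k3 := key v₁ v₂ hv₁v₂
  have e3 := hedge1 v₁ v₂ hv₁v₂
  linarith
end

section
/- Let k ≥ 1 and suppose G contains an odd cycle C = q, v_1, v_2, …, v_{2k}, q through the chosen vertex q. Then every feasible solution of the LP relaxation of the POP2 model satisfies 1 + ∑_{i=1}^H g_{i,q} ≥ 2 + 1/(k+1). In particular, for a triangle through q (k = 1), the bound is 5/2. -/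
open Finset

private lemma teleSum (f : ℕ → ℝ) : ∀ n, 1 ≤ n →
    ∑ i ∈ Icc 2 n, (f (i - 1) - f i) = f 1 - f n := by
  intro n
  induction n with
  | zero => omega
  | succ m ih =>
    intro _
    rcases Nat.lt_or_ge m 1 with h | h
    · have : m = 0 := by omega
      subst this
      rw [show Icc 2 1 = (∅ : Finset ℕ) from Finset.Icc_eq_empty (by omega)]
      simp
    · rw [Finset.sum_Icc_succ_top (by omega : 2 ≤ m + 1), ih h]
      simp only [Nat.add_sub_cancel]
      ring

private lemma shiftSum (f : ℕ → ℝ) : ∀ m, ∑ i ∈ Icc 2 (m + 1), f (i - 1) = ∑ i ∈ Icc 1 m, f i := by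
  intro m
  induction m with
  | zero =>
    rw [show Icc 2 1 = (∅ : Finset ℕ) from Finset.Icc_eq_empty (by omega),
        show Icc 1 0 = (∅ : Finset ℕ) from Finset.Icc_eq_empty (by omega)]
    simp
  | succ n ih =>
    rw [Finset.sum_Icc_succ_top (by omega : 2 ≤ n + 1 + 1),
        Finset.sum_Icc_succ_top (by omega : 1 ≤ n + 1), ih]
    simp only [Nat.add_sub_cancel]

/-- Let `k ≥ 1` and suppose `G` contains an odd cycle
`q, v 1, …, v (2k), q` through the chosen vertex `q`. Then every feasible solution of the
LP relaxation of POP2 satisfies `1 + ∑_{i=1}^H g i q ≥ 2 + 1/(k+1)`. -/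
theorem pop2_odd_cycle_bound {V : Type*} [Fintype V] (G : SimpleGraph V)
    (H : ℕ) (hH : 2 ≤ H) (q : V) (k : ℕ) (hk : 1 ≤ k) (v : ℕ → V)
    (hdist : ∀ i ∈ Icc 1 (2 * k), ∀ j ∈ Icc 1 (2 * k), i ≠ j → v i ≠ v j)
    (hvq : ∀ i ∈ Icc 1 (2 * k), v i ≠ q)
    (hadj1 : G.Adj q (v 1))
    (hadjc : ∀ j ∈ Icc 1 (2 * k - 1), G.Adj (v j) (v (j + 1)))
    (hadj2 : G.Adj (v (2 * k)) q)
    (g : ℕ → V → ℝ)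
    (hbound : ∀ i w, 0 ≤ g i w ∧ g i w ≤ 1)
    (hgH : ∀ w : V, g H w = 0)
    (hmono : ∀ w : V, ∀ i ∈ Icc 2 H, g (i - 1) w - g i w ≥ 0)
    (hedge1 : ∀ u w : V, G.Adj u w → g 1 u + g 1 w ≥ 2 - g 1 q)
    (hedge2 : ∀ u w : V, G.Adj u w → ∀ i ∈ Icc 2 H,
      (g (i - 1) u - g i u) + (g (i - 1) w - g i w) ≤ g (i - 1) q)
    (hqmax : ∀ w : V, ∀ i ∈ Icc 1 H, g i q - g i w ≥ 0)
    (hnbr : ∀ w : V, G.Adj q w → ∀ i ∈ Icc 1 (H - 1), g (i + 1) q - g i w ≥ 0) :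
    1 + ∑ i ∈ Icc 1 H, g i q ≥ 2 + 1 / ((k : ℝ) + 1) := by
  obtain ⟨m, rfl⟩ : ∃ m, H = m + 1 := ⟨H - 1, by omega⟩
  have hm : 1 ≤ m := by omega
  set S := ∑ i ∈ Icc 1 (m + 1), g i q with hS
  have hgHq : g (m + 1) q = 0 := hgH q
  have hSsplit : S = (∑ i ∈ Icc 1 m, g i q) + g (m + 1) q := by
    rw [hS, Finset.sum_Icc_succ_top (by omega : 1 ≤ m + 1)]
  -- upper bound on pairs of adjacent level-1 values
  have pairUB : ∀ u w : V, G.Adj u w → g 1 u + g 1 w ≤ S := by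
    intro u w huw
    have h1 : ∑ i ∈ Icc 2 (m + 1), ((g (i - 1) u - g i u) + (g (i - 1) w - g i w))
        ≤ ∑ i ∈ Icc 2 (m + 1), g (i - 1) q :=
      Finset.sum_le_sum (fun i hi => hedge2 u w huw i hi)
    rw [Finset.sum_add_distrib, teleSum (fun j => g j u) _ (by omega),
        teleSum (fun j => g j w) _ (by omega), shiftSum (fun j => g j q)] at h1
    have hu := hgH u
    have hw := hgH w
    have hle : (∑ i ∈ Icc 1 m, g i q) ≤ S := by rw [hSsplit, hgHq]; linarith
    linarith
  have a1le : g 1 q ≤ 1 := (hbound 1 q).2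
  have hx1 : g 1 (v 1) ≤ g 2 q := by
    have := hnbr (v 1) hadj1 1 (Finset.mem_Icc.mpr ⟨by omega, by omega⟩)
    linarith
  have hx2k : g 1 (v (2 * k)) ≤ g 2 q := by
    have := hnbr (v (2 * k)) hadj2.symm 1 (Finset.mem_Icc.mpr ⟨by omega, by omega⟩)
    linarith
  -- telescoping along the path
  have htele : ∀ j : ℕ, 2 * j + 1 ≤ 2 * k →
      g 1 (v (2 * j + 1)) ≤ g 1 (v 1) + (j : ℝ) * (g 1 q + S - 2) := by
    intro j
    induction j with
    | zero => intro _; norm_num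
    | succ n ih =>
      intro hj
      have h1 := ih (by omega)
      have adj1 : G.Adj (v (2 * n + 1)) (v (2 * n + 2)) := by
        have := hadjc (2 * n + 1) (Finset.mem_Icc.mpr ⟨by omega, by omega⟩)
        rwa [show 2 * n + 1 + 1 = 2 * n + 2 by omega] at this
      have adj2 : G.Adj (v (2 * n + 2)) (v (2 * n + 3)) := by
        have := hadjc (2 * n + 2) (Finset.mem_Icc.mpr ⟨by omega, by omega⟩)
        rwa [show 2 * n + 2 + 1 = 2 * n + 3 by omega] at this
      have e1 := hedge1 _ _ adj1
      have e2 := pairUB _ _ adj2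
      rw [show 2 * (n + 1) + 1 = 2 * n + 3 by omega]
      push_cast
      linarith
  obtain ⟨k', rfl⟩ : ∃ k', k = k' + 1 := ⟨k - 1, by omega⟩
  have hfin := htele k' (by omega)
  have adj3 : G.Adj (v (2 * k' + 1)) (v (2 * k' + 2)) := by
    have := hadjc (2 * k' + 1) (Finset.mem_Icc.mpr ⟨by omega, by omega⟩)
    rwa [show 2 * k' + 1 + 1 = 2 * k' + 2 by omega] at this
  have e3 := hedge1 _ _ adj3
  rw [show 2 * (k' + 1) = 2 * k' + 2 by omega] at hx2k
  have key1 : 2 - g 1 q ≤ 2 * g 2 q + (k' : ℝ) * (g 1 q + S - 2) := by linarith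
  -- S ≥ a1 + a2
  have hS2 : g 1 q + g 2 q ≤ S := by
    have hsub : ({1, 2} : Finset ℕ) ⊆ Icc 1 (m + 1) := by
      intro x hx
      simp only [Finset.mem_insert, Finset.mem_singleton] at hx
      rcases hx with rfl | rfl <;> exact Finset.mem_Icc.mpr ⟨by omega, by omega⟩
    have := Finset.sum_le_sum_of_subset_of_nonneg hsub (fun i _ _ => (hbound i q).1)
    rwa [Finset.sum_pair (by norm_num : (1 : ℕ) ≠ 2)] at this
  have hk1 : (0 : ℝ) < ((k' + 1 : ℕ) : ℝ) + 1 := by positivity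
  rcases Nat.lt_or_ge k' 1 with hk2 | hk2
  · -- k = 1
    have : k' = 0 := by omega
    subst this
    rcases Nat.lt_or_ge m 2 with hm2 | hm3
    · -- H = 2
      have hm1 : m = 1 := by omega
      subst hm1
      have h20 : g 2 q = 0 := hgHq
      norm_num at key1 ⊢
      linarith
    · -- H ≥ 3
      have adjv12 : G.Adj (v 1) (v 2) := by
        have := hadjc 1 (Finset.mem_Icc.mpr ⟨by omega, by omega⟩)
        rwa [show 1 + 1 = 2 by omega] at this
      have hadj2' : G.Adj q (v 2) := by
        have := hadj2.symm
        rwa [show 2 * (0 + 1) = 2 by omega] at this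
      have n1 := hnbr (v 1) hadj1 2 (Finset.mem_Icc.mpr ⟨by omega, by omega⟩)
      have n2 := hnbr (v 2) hadj2' 2 (Finset.mem_Icc.mpr ⟨by omega, by omega⟩)
      have e4 := hedge2 (v 1) (v 2) adjv12 2 (Finset.mem_Icc.mpr ⟨by omega, by omega⟩)
      have e5 := hedge1 (v 1) (v 2) adjv12
      simp only [show (2 : ℕ) - 1 = 1 by omega] at e4
      have hS3 : g 1 q + g 2 q + g 3 q ≤ S := by
        have hsub : ({1, 2, 3} : Finset ℕ) ⊆ Icc 1 (m + 1) := by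
          intro x hx
          simp only [Finset.mem_insert, Finset.mem_singleton] at hx
          rcases hx with rfl | rfl | rfl <;> exact Finset.mem_Icc.mpr ⟨by omega, by omega⟩
        have := Finset.sum_le_sum_of_subset_of_nonneg hsub (fun i _ _ => (hbound i q).1)
        rw [show ({1, 2, 3} : Finset ℕ) = insert 1 {2, 3} from rfl,
            Finset.sum_insert (by norm_num),
            Finset.sum_pair (by norm_num : (2 : ℕ) ≠ 3)] at this
        linarith
      norm_num
      linarith
  · -- k ≥ 2
    have hk2' : (1 : ℝ) ≤ (k' : ℝ) := by exact_mod_cast hk2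
    have hprod : (0 : ℝ) ≤ ((k' : ℝ) - 1) * (1 - g 1 q) :=
      mul_nonneg (by linarith) (by linarith)
    have hgoal : 1 / (((k' + 1 : ℕ) : ℝ) + 1) ≤ S - 1 := by
      rw [div_le_iff₀ hk1]
      push_cast
      nlinarith [key1, hprod, hS2]
    linarith
end
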